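/- Euler-type decomposition consequence: for every M ∈ Sp(2n,ℝ) there exists N ∈ Sp(2n,ℝ) of the form N = [[D,0],[0,D⁻¹]]·V with D positive diagonal of order n and V both real orthogonal and symplectic, such that MᵀM = NᵀN. -/

import Mathlib

open Matrix
open scoped ComplexOrder

noncomputable section

/-- The standard symplectic form matrix J = [[0, -I],[I, 0]] of order 2n. -/
def sympJ (n : ℕ) : Matrix (Fin n ⊕ Fin n) (Fin n ⊕ Fin n) ℝ :=
  Matrix.fromBlocks 0 (-1) 1 0

/-- A real 2n×2n matrix L is symplectic if Lᵀ J L = J. -/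
def IsSymplectic {n : ℕ} (L : Matrix (Fin n ⊕ Fin n) (Fin n ⊕ Fin n) ℝ) : Prop :=
  Lᵀ * sympJ n * L = sympJ n

/-- The convex set K_n of Gaussian covariance matrices:
real symmetric S of order 2n with 2S - iJ positive semidefinite (as a complex matrix). -/
def Kset (n : ℕ) : Set (Matrix (Fin n ⊕ Fin n) (Fin n ⊕ Fin n) ℝ) :=
  {S | S.IsSymm ∧
    ((2 : ℂ) • S.map (Complex.ofReal) - Complex.I • (sympJ n).map (Complex.ofReal)).PosSemidef}

/-! Since `P = MᵀM` is symmetric and symplectic, `P J P = J`, so `J` carries a unit eigenvector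
`x` of `P` with eigenvalue `μ` to one with eigenvalue `μ⁻¹`, orthogonal to `x`. The orthogonal
complement of `span {x, J x}` is again invariant under `P` and `J`, so induction gives an
orthonormal family `x₁, …, xₙ` of eigenvectors of `P` with `⟪xᵢ, J xⱼ⟫ = 0`. The matrix `V` with
rows `xᵢ` and `J xᵢ` is then orthogonal and symplectic with `V P Vᵀ = diag(μ, μ⁻¹)`, and
`D = diag(√μ)` splits this diagonal matrix as `[[D,0],[0,D⁻¹]]ᵀ [[D,0],[0,D⁻¹]]`. -/

open scoped RealInnerProductSpace
open Module Submodule WithLp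

section InnerProductSpace

variable {E : Type*} [NormedAddCommGroup E] [InnerProductSpace ℝ E]

theorem Orthonormal.fin_cons {m : ℕ} {x : Fin m → E} (hx : Orthonormal ℝ x) {x₀ : E}
    (h₀ : ‖x₀‖ = 1) (h : ∀ i, ⟪x₀, x i⟫ = 0) :
    Orthonormal ℝ (Fin.cons x₀ x : Fin (m + 1) → E) := by
  classical
  rw [orthonormal_iff_ite] at hx ⊢
  simp [Fin.forall_fin_succ, h₀, h, hx, real_inner_comm x₀, eq_comm (a := (0 : Fin (m + 1))),
    Fin.succ_ne_zero]

theorem Submodule.apply_mem_orthogonal {T S : E →ₗ[ℝ] E} (hTS : ∀ u v, ⟪T u, v⟫ = ⟪u, S v⟫)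
    {W : Submodule ℝ E} (hW : ∀ w ∈ W, S w ∈ W) {v : E} (hv : v ∈ Wᗮ) : T v ∈ Wᗮ := by
  intro w hw
  rw [real_inner_comm, hTS, real_inner_comm]
  exact hv _ (hW w hw)

theorem Submodule.apply_mem_span_pair {T : E →ₗ[ℝ] E} {a b : E} (ha : T a ∈ span ℝ {a, b})
    (hb : T b ∈ span ℝ {a, b}) {v : E} (hv : v ∈ span ℝ {a, b}) : T v ∈ span ℝ {a, b} := by
  have : span ℝ {a, b} ≤ (span ℝ {a, b}).comap T := by
    rw [span_le, Set.insert_subset_iff, Set.singleton_subset_iff]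
    exact ⟨ha, hb⟩
  exact this hv

theorem LinearMap.IsSymmetric.exists_unit_eigenvector_mem [FiniteDimensional ℝ E]
    {p : E →ₗ[ℝ] E} (hp : p.IsSymmetric) {U : Submodule ℝ E} (hUp : ∀ v ∈ U, p v ∈ U)
    (hU : 0 < finrank ℝ U) : ∃ x ∈ U, ‖x‖ = 1 ∧ ∃ μ : ℝ, p x = μ • x := by
  have hpU := hp.restrict_invariant hUp
  let b := hpU.eigenvectorBasis rfl
  let i : Fin (finrank ℝ U) := ⟨0, hU⟩
  exact ⟨b i, (b i).2, b.orthonormal.1 i, _,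
    congrArg Subtype.val (hpU.apply_eigenvectorBasis rfl i)⟩

end InnerProductSpace

section ComplexStructure

variable {E : Type*} [NormedAddCommGroup E] [InnerProductSpace ℝ E] {k : E →ₗ[ℝ] E}

theorem inner_self_apply_eq_zero_of_skew (hk : ∀ u v, ⟪k u, v⟫ = -⟪u, k v⟫) (u : E) :
    ⟪u, k u⟫ = 0 := by
  have := hk u u
  rw [real_inner_comm] at this
  linarith

theorem inner_apply_apply_of_skew (hk : ∀ u v, ⟪k u, v⟫ = -⟪u, k v⟫)
    (hkk : ∀ v, k (k v) = -v) (u v : E) : ⟪k u, k v⟫ = ⟪u, v⟫ := by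
  rw [hk, hkk, inner_neg_right, neg_neg]

theorem finrank_span_pair_apply_of_skew (hk : ∀ u v, ⟪k u, v⟫ = -⟪u, k v⟫)
    (hkk : ∀ v, k (k v) = -v) {x : E} (hx : ‖x‖ = 1) : finrank ℝ (span ℝ {x, k x}) = 2 := by
  have hkx : ‖k x‖ = 1 := by
    rw [← pow_eq_one_iff_of_nonneg (norm_nonneg _) two_ne_zero, ← real_inner_self_eq_norm_sq,
      inner_apply_apply_of_skew hk hkk, real_inner_self_eq_norm_sq, hx, one_pow]
  have hpair : Orthonormal ℝ ![x, k x] := by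
    rw [orthonormal_iff_ite]
    simp [Fin.forall_fin_two, hx, hkx, inner_self_apply_eq_zero_of_skew hk, real_inner_comm x]
  rw [← Fintype.card_fin 2, ← finrank_span_eq_card hpair.linearIndependent,
    Matrix.range_cons_cons_empty]

theorem Orthonormal.sum_elim_comp (hk : ∀ u v, ⟪k u, v⟫ = -⟪u, k v⟫) (hkk : ∀ v, k (k v) = -v)
    {ι : Type*} {x : ι → E} (hx : Orthonormal ℝ x) (hxk : ∀ i j, ⟪x i, k (x j)⟫ = 0) :
    Orthonormal ℝ (Sum.elim x (k ∘ x)) := by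
  classical
  rw [orthonormal_iff_ite] at hx ⊢
  rintro (i | i) (j | j) <;> simp [hk, hkk, hx, hxk]

variable {p : E →ₗ[ℝ] E}

theorem apply_map_eq_inv_smul_of_apply_eq_smul (hkk : ∀ v, k (k v) = -v)
    (hpkp : ∀ v, p (k (p v)) = k v) {x : E} (hx : x ≠ 0) {μ : ℝ} (hpx : p x = μ • x) :
    p (k x) = μ⁻¹ • k x := by
  have h : μ • p (k x) = k x := by simpa [hpx] using hpkp x
  have hμ : μ ≠ 0 := by
    rintro rfl
    have hkx : k x = 0 := by simpa using h.symm
    exact hx (by simpa [hkx, eq_comm] using hkk x)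
  rw [← inv_smul_smul₀ hμ (p (k x)), h]

theorem exists_orthonormal_isotropic_eigenvectors_of_invariant [FiniteDimensional ℝ E]
    (hp : p.IsSymmetric) (hk : ∀ u v, ⟪k u, v⟫ = -⟪u, k v⟫) (hkk : ∀ v, k (k v) = -v)
    (hpkp : ∀ v, p (k (p v)) = k v) (U : Submodule ℝ E) (hUp : ∀ v ∈ U, p v ∈ U)
    (hUk : ∀ v ∈ U, k v ∈ U) :
    ∃ (m : ℕ) (x : Fin m → E) (μ : Fin m → ℝ), finrank ℝ U = 2 * m ∧ (∀ i, x i ∈ U) ∧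
      Orthonormal ℝ x ∧ (∀ i j, ⟪x i, k (x j)⟫ = 0) ∧ ∀ i, p (x i) = μ i • x i := by
  induction hd : finrank ℝ U using Nat.strong_induction_on generalizing U with
  | _ d ih =>
  rcases Nat.eq_zero_or_pos d with rfl | hd0
  · exact ⟨0, Fin.elim0, Fin.elim0, rfl, Fin.rec0, by simp [Orthonormal, Pairwise], Fin.rec0,
      Fin.rec0⟩
  obtain ⟨x₀, hx₀U, hx₀, μ₀, hpx₀⟩ := hp.exists_unit_eigenvector_mem hUp (hd ▸ hd0)
  set W := span ℝ {x₀, k x₀}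
  have hWU : W ≤ U := by
    rw [span_le, Set.insert_subset_iff, Set.singleton_subset_iff]
    exact ⟨hx₀U, hUk _ hx₀U⟩
  have hW : finrank ℝ W = 2 := finrank_span_pair_apply_of_skew hk hkk hx₀
  have h2d : 2 ≤ d := hd ▸ hW ▸ finrank_mono hWU
  have hWp : ∀ w ∈ W, p w ∈ W := fun w => apply_mem_span_pair
    (by rw [hpx₀]; exact smul_mem _ _ (subset_span (by simp)))
    (by rw [apply_map_eq_inv_smul_of_apply_eq_smul hkk hpkp (by simp [← norm_ne_zero_iff, hx₀])
          hpx₀]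
        exact smul_mem _ _ (subset_span (by simp)))
  have hWk : ∀ w ∈ W, (-k) w ∈ W := fun w => apply_mem_span_pair
    (neg_mem (subset_span (by simp))) (by simpa [hkk] using subset_span (by simp))
  have hkW : ∀ v ∈ Wᗮ ⊓ U, k v ∈ Wᗮ ⊓ U := fun v hv =>
    ⟨apply_mem_orthogonal (S := -k) (by simp [hk]) hWk hv.1, hUk v hv.2⟩
  obtain ⟨m, x, μ, hm, hxU, hx, hxk, hpx⟩ := ih (d - 2) (by omega) (Wᗮ ⊓ U)
    (fun v hv => ⟨apply_mem_orthogonal hp hWp hv.1, hUp v hv.2⟩) hkW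
    (finrank_add_inf_finrank_orthogonal' hWU (by omega))
  have hperp : ∀ v ∈ Wᗮ ⊓ U, ⟪x₀, v⟫ = 0 ∧ ⟪k x₀, v⟫ = 0 := fun v hv =>
    ⟨hv.1 _ (subset_span (by simp)), hv.1 _ (subset_span (by simp))⟩
  refine ⟨m + 1, Fin.cons x₀ x, Fin.cons μ₀ μ, by omega, Fin.cases hx₀U fun j => (hxU j).2,
    hx.fin_cons hx₀ fun j => (hperp _ (hxU j)).1, ?_, Fin.cases hpx₀ hpx⟩
  refine Fin.cases (Fin.cases (inner_self_apply_eq_zero_of_skew hk x₀)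
    fun j => (hperp _ (hkW _ (hxU j))).1) fun i => Fin.cases ?_ (hxk i)
  simpa [real_inner_comm] using (hperp _ (hxU i)).2

theorem exists_orthonormal_isotropic_eigenvectors [FiniteDimensional ℝ E] (hp : p.IsSymmetric)
    (hk : ∀ u v, ⟪k u, v⟫ = -⟪u, k v⟫) (hkk : ∀ v, k (k v) = -v)
    (hpkp : ∀ v, p (k (p v)) = k v) {n : ℕ} (hE : finrank ℝ E = 2 * n) :
    ∃ (x : Fin n → E) (μ : Fin n → ℝ),
      Orthonormal ℝ x ∧ (∀ i j, ⟪x i, k (x j)⟫ = 0) ∧ ∀ i, p (x i) = μ i • x i := by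
  obtain ⟨m, x, μ, hm, -, hx⟩ := exists_orthonormal_isotropic_eigenvectors_of_invariant hp hk hkk
    hpkp ⊤ (fun _ _ => mem_top) (fun _ _ => mem_top)
  obtain rfl : m = n := by rw [finrank_top] at hm; omega
  exact ⟨x, μ, hx⟩

end ComplexStructure

section Rows

variable {ι κ : Type*} [Fintype κ] [DecidableEq κ]

theorem of_ofLp_mul_mul_transpose_apply (y : ι → EuclideanSpace ℝ κ) (B : Matrix κ κ ℝ)
    (a b : ι) :
    (of (fun a => ofLp (y a)) * B * (of fun a => ofLp (y a))ᵀ) a b =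
      ⟪y a, toEuclideanLin B (y b)⟫ := by
  rw [EuclideanSpace.inner_eq_star_dotProduct, ofLp_toLpLin, toLin'_apply, Matrix.mul_assoc,
    mul_apply]
  simp [dotProduct, mulVec, mul_apply, Finset.mul_sum, mul_comm, mul_left_comm]

theorem of_ofLp_mul_mul_transpose_eq_diagonal [DecidableEq ι] {y : ι → EuclideanSpace ℝ κ}
    (hy : Orthonormal ℝ y) {B : Matrix κ κ ℝ} {ν : ι → ℝ}
    (hB : ∀ a, toEuclideanLin B (y a) = ν a • y a) :
    of (fun a => ofLp (y a)) * B * (of fun a => ofLp (y a))ᵀ = diagonal ν := by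
  ext a b
  rw [of_ofLp_mul_mul_transpose_apply, hB, inner_smul_right, orthonormal_iff_ite.mp hy,
    diagonal_apply]
  split_ifs <;> simp_all

theorem Matrix.PosDef.inner_toEuclideanLin_pos {P : Matrix κ κ ℝ} (hP : P.PosDef)
    {v : EuclideanSpace ℝ κ} (hv : v ≠ 0) : 0 < ⟪v, toEuclideanLin P v⟫ := by
  rw [EuclideanSpace.inner_eq_star_dotProduct, ofLp_toLpLin, toLin'_apply, dotProduct_comm]
  exact hP.dotProduct_mulVec_pos (by simpa using hv)

end Rows

section Symplectic

variable {l : Type*} [Fintype l] [DecidableEq l]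

theorem inner_toEuclideanLin_J_left (u v : EuclideanSpace ℝ (l ⊕ l)) :
    ⟪toEuclideanLin (J l ℝ) u, v⟫ = -⟪u, toEuclideanLin (J l ℝ) v⟫ := by
  rw [← LinearMap.adjoint_inner_right, ← toEuclideanLin_conjTranspose_eq_adjoint,
    conjTranspose_eq_transpose_of_trivial, J_transpose, map_neg, LinearMap.neg_apply,
    inner_neg_right]

theorem toEuclideanLin_J_apply_apply (v : EuclideanSpace ℝ (l ⊕ l)) :
    toEuclideanLin (J l ℝ) (toEuclideanLin (J l ℝ) v) = -v := by
  rw [← LinearMap.comp_apply, ← toLpLin_mul_same, J_squared]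
  simp

theorem toEuclideanLin_apply_J_apply_of_mul_J_mul {P : Matrix (l ⊕ l) (l ⊕ l) ℝ}
    (hPJP : P * J l ℝ * P = J l ℝ) (v : EuclideanSpace ℝ (l ⊕ l)) :
    toEuclideanLin P (toEuclideanLin (J l ℝ) (toEuclideanLin P v)) =
      toEuclideanLin (J l ℝ) v := by
  rw [← LinearMap.comp_apply, ← LinearMap.comp_apply, ← toLpLin_mul_same, ← toLpLin_mul_same,
    hPJP]

theorem posDef_transpose_mul_self_of_mem_symplecticGroup {M : Matrix (l ⊕ l) (l ⊕ l) ℝ}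
    (hM : M ∈ symplecticGroup l ℝ) : (Mᵀ * M).PosDef := by
  have hMinj : Function.Injective M.mulVec := mulVec_injective_iff_isUnit.mpr
    ((isUnit_iff_isUnit_det M).mpr (SymplecticGroup.symplectic_det hM))
  simpa [conjTranspose_eq_transpose_of_trivial] using PosDef.conjTranspose_mul_self M hMinj

def symplecticFrameMatrix (x : l → EuclideanSpace ℝ (l ⊕ l)) : Matrix (l ⊕ l) (l ⊕ l) ℝ :=
  of fun a => ofLp (Sum.elim x (toEuclideanLin (J l ℝ) ∘ x) a)

variable {x : l → EuclideanSpace ℝ (l ⊕ l)}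

theorem symplecticFrameMatrix_mul_transpose (hx : Orthonormal ℝ x)
    (hxJ : ∀ i j, ⟪x i, toEuclideanLin (J l ℝ) (x j)⟫ = 0) :
    symplecticFrameMatrix x * (symplecticFrameMatrix x)ᵀ = 1 := by
  simpa [symplecticFrameMatrix] using of_ofLp_mul_mul_transpose_eq_diagonal
    (hx.sum_elim_comp inner_toEuclideanLin_J_left toEuclideanLin_J_apply_apply hxJ) (B := 1)
    (ν := 1) (by simp)

theorem symplecticFrameMatrix_mem_symplecticGroup (hx : Orthonormal ℝ x)
    (hxJ : ∀ i j, ⟪x i, toEuclideanLin (J l ℝ) (x j)⟫ = 0) :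
    symplecticFrameMatrix x ∈ symplecticGroup l ℝ := by
  have hx' := orthonormal_iff_ite.mp hx
  rw [SymplecticGroup.mem_iff]
  ext a b
  rw [symplecticFrameMatrix, of_ofLp_mul_mul_transpose_apply]
  set k := toEuclideanLin (J l ℝ)
  have hk : ∀ u v, ⟪k u, v⟫ = -⟪u, k v⟫ := inner_toEuclideanLin_J_left
  have hkk : ∀ v, k (k v) = -v := toEuclideanLin_J_apply_apply
  rcases a with i | i <;> rcases b with j | j <;> simp [J, hx', hxJ, hk, hkk, one_apply]

theorem symplecticFrameMatrix_mul_mul_transpose (hx : Orthonormal ℝ x)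
    (hxJ : ∀ i j, ⟪x i, toEuclideanLin (J l ℝ) (x j)⟫ = 0) {P : Matrix (l ⊕ l) (l ⊕ l) ℝ}
    (hPJP : P * J l ℝ * P = J l ℝ) {μ : l → ℝ} (hPx : ∀ i, toEuclideanLin P (x i) = μ i • x i) :
    symplecticFrameMatrix x * P * (symplecticFrameMatrix x)ᵀ =
      fromBlocks (diagonal μ) 0 0 (diagonal μ⁻¹) := by
  rw [symplecticFrameMatrix, of_ofLp_mul_mul_transpose_eq_diagonal (ν := Sum.elim μ μ⁻¹)
    (hx.sum_elim_comp inner_toEuclideanLin_J_left toEuclideanLin_J_apply_apply hxJ),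
    ← fromBlocks_diagonal]
  rintro (i | i)
  · exact hPx i
  · exact apply_map_eq_inv_smul_of_apply_eq_smul toEuclideanLin_J_apply_apply
      (toEuclideanLin_apply_J_apply_of_mul_J_mul hPJP) (hx.ne_zero i) (hPx i)

end Symplectic

section DiagonalBlocks

variable {l K : Type*} [Fintype l] [DecidableEq l] [Field K] {d : l → K}

theorem inv_diagonal_of_ne_zero (hd : ∀ i, d i ≠ 0) : (diagonal d)⁻¹ = diagonal d⁻¹ :=
  inv_eq_right_inv (by rw [diagonal_mul_diagonal, ← diagonal_one]; congr; ext i; simp [hd])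

theorem fromBlocks_diagonal_inv_mem_symplecticGroup (hd : ∀ i, d i ≠ 0) :
    fromBlocks (diagonal d) 0 0 (diagonal d)⁻¹ ∈ symplecticGroup l K := by
  rw [SymplecticGroup.fromBlocks_mem_iff, inv_diagonal_of_ne_zero hd]
  simp [diagonal_mul_diagonal, ← diagonal_one, hd]

theorem fromBlocks_diagonal_inv_transpose_mul_self (hd : ∀ i, d i ≠ 0) :
    (fromBlocks (diagonal d) 0 0 (diagonal d)⁻¹)ᵀ * fromBlocks (diagonal d) 0 0 (diagonal d)⁻¹ =
      fromBlocks (diagonal (d ^ 2)) 0 0 (diagonal (d ^ 2)⁻¹) := by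
  simp [inv_diagonal_of_ne_zero hd, diagonal_mul_diagonal, sq]

end DiagonalBlocks

theorem exists_orthogonal_symplectic_conj_fromBlocks_diagonal {n : ℕ}
    {P : Matrix (Fin n ⊕ Fin n) (Fin n ⊕ Fin n) ℝ} (hP : P.PosDef)
    (hPs : P ∈ symplecticGroup (Fin n) ℝ) :
    ∃ (μ : Fin n → ℝ) (V : Matrix (Fin n ⊕ Fin n) (Fin n ⊕ Fin n) ℝ), (∀ i, 0 < μ i) ∧
      V ∈ symplecticGroup (Fin n) ℝ ∧ Vᵀ * V = 1 ∧
      P = Vᵀ * fromBlocks (diagonal μ) 0 0 (diagonal μ⁻¹) * V := by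
  have hPt : Pᵀ = P := by simpa [conjTranspose_eq_transpose_of_trivial] using hP.isHermitian.eq
  have hPJP : P * J (Fin n) ℝ * P = J (Fin n) ℝ := by
    simpa [hPt] using SymplecticGroup.mem_iff.mp hPs
  obtain ⟨x, μ, hx, hxJ, hPx⟩ := exists_orthonormal_isotropic_eigenvectors
    (isSymmetric_toEuclideanLin_iff.mpr hP.isHermitian) inner_toEuclideanLin_J_left
    toEuclideanLin_J_apply_apply (toEuclideanLin_apply_J_apply_of_mul_J_mul hPJP) (n := n)
    (by simp [two_mul])
  set V := symplecticFrameMatrix x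
  have hV : V * Vᵀ = 1 := symplecticFrameMatrix_mul_transpose hx hxJ
  refine ⟨μ, V, fun i => ?_, symplecticFrameMatrix_mem_symplecticGroup hx hxJ,
    mul_eq_one_comm.mp hV, ?_⟩
  · simpa [hPx, inner_smul_right, real_inner_self_eq_norm_sq, hx.1 i] using
      hP.inner_toEuclideanLin_pos (hx.ne_zero i)
  · rw [← symplecticFrameMatrix_mul_mul_transpose hx hxJ hPJP hPx]
    calc P = (Vᵀ * V) * P * (Vᵀ * V) := by
          rw [mul_eq_one_comm.mp hV, Matrix.one_mul, Matrix.mul_one]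
      _ = Vᵀ * (V * P * Vᵀ) * V := by simp only [Matrix.mul_assoc]


theorem euler_decomposition_MtM (n : ℕ)
    (M : Matrix (Fin n ⊕ Fin n) (Fin n ⊕ Fin n) ℝ) (hM : IsSymplectic M) :
    ∃ (d : Fin n → ℝ) (V : Matrix (Fin n ⊕ Fin n) (Fin n ⊕ Fin n) ℝ),
      (∀ i, 0 < d i) ∧ IsSymplectic V ∧ Vᵀ * V = 1 ∧
      IsSymplectic (Matrix.fromBlocks (Matrix.diagonal d) 0 0 (Matrix.diagonal d)⁻¹ * V) ∧
      Mᵀ * M =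
        (Matrix.fromBlocks (Matrix.diagonal d) 0 0 (Matrix.diagonal d)⁻¹ * V)ᵀ *
        (Matrix.fromBlocks (Matrix.diagonal d) 0 0 (Matrix.diagonal d)⁻¹ * V) := by
  -- `sympJ n` is Mathlib's `J (Fin n) ℝ` by definition.
  have hM' : M ∈ symplecticGroup (Fin n) ℝ := SymplecticGroup.mem_iff'.mpr hM
  obtain ⟨μ, V, hμ, hV, hVV, hMtM⟩ := exists_orthogonal_symplectic_conj_fromBlocks_diagonal
    (posDef_transpose_mul_self_of_mem_symplecticGroup hM')
    (mul_mem (SymplecticGroup.transpose_mem hM') hM')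
  set d : Fin n → ℝ := fun i => √(μ i)
  have hd : ∀ i, 0 < d i := fun i => Real.sqrt_pos.mpr (hμ i)
  have hd2 : d ^ 2 = μ := funext fun i => Real.sq_sqrt (hμ i).le
  refine ⟨d, V, hd, SymplecticGroup.mem_iff'.mp hV, hVV, SymplecticGroup.mem_iff'.mp
    (mul_mem (fromBlocks_diagonal_inv_mem_symplecticGroup fun i => (hd i).ne') hV), ?_⟩
  rw [hMtM, ← hd2, ← fromBlocks_diagonal_inv_transpose_mul_self fun i => (hd i).ne',
    transpose_mul]
  simp only [Matrix.mul_assoc]
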